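/- Fix α ∈ (0, 1] and set c_α = cos(απ/2), s_α = sin(απ/2). Define for x > 0: ω_α(x) = −2s_α x^α/(1 + 2c_α x^α + x^{2α}), u_{α,x}(x) = 2(1 + c_α x^α)/(1 + 2c_α x^α + x^{2α}), and the weight φ_α(x) = (1/(2s_α))·(1 + 2c_α x^α + x^{2α})²/x^{1+3α}. Then for all x > 0: (1/(2φ_α(x)))·(d/dx)((x/α)·φ_α(x)) + (−1 + u_{α,x}(x)) = −1/2. -/

import Mathlib

open Real

noncomputable def ωα (α x : ℝ) : ℝ :=
  -2 * Real.sin (α * π / 2) * x ^ α / (1 + 2 * Real.cos (α * π / 2) * x ^ α + x ^ (2 * α))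

noncomputable def uαx (α x : ℝ) : ℝ :=
  2 * (1 + Real.cos (α * π / 2) * x ^ α) / (1 + 2 * Real.cos (α * π / 2) * x ^ α + x ^ (2 * α))

noncomputable def φα (α x : ℝ) : ℝ :=
  (1 / (2 * Real.sin (α * π / 2))) *
    (1 + 2 * Real.cos (α * π / 2) * x ^ α + x ^ (2 * α)) ^ 2 / x ^ (1 + 3 * α)

/-!
Write `t = x ^ α` and `N = 1 + 2 cos(απ/2) t + t²`, so that `φ_α = N² / (2 sin(απ/2) x^{1+3α})`.
The left-hand side only involves the logarithmic derivative of `φ_α`, and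
`x φ_α' / φ_α = 4α (cos(απ/2) t + t²) / N - (1 + 3α)`. Hence
`(1 / (2φ_α)) ((x/α) φ_α)' = 2 (cos(απ/2) t + t²) / N - 3/2`, while `u_α = 2 (1 + cos(απ/2) t) / N`;
their sum is `2 - 3/2`.
-/

noncomputable def weightDen (α x : ℝ) : ℝ :=
  1 + 2 * cos (α * π / 2) * x ^ α + x ^ (2 * α)

-- `1 + 2 cos θ t + t² = (t + cos θ)² + sin² θ`
theorem one_add_two_mul_cos_mul_add_sq_pos {θ : ℝ} (hθ : sin θ ≠ 0) (t : ℝ) :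
    0 < 1 + 2 * cos θ * t + t ^ 2 := by
  nlinarith [sq_nonneg (t + cos θ), sin_sq_add_cos_sq θ, pow_pos (abs_pos.2 hθ) 2, sq_abs (sin θ)]

theorem weightDen_pos {α x : ℝ} (hs : sin (α * π / 2) ≠ 0) (hx : 0 < x) : 0 < weightDen α x := by
  have hsq : x ^ (2 * α) = (x ^ α) ^ 2 := by rw [mul_comm, rpow_mul hx.le, rpow_two]
  rw [weightDen, hsq]
  exact one_add_two_mul_cos_mul_add_sq_pos hs _

theorem hasDerivAt_rpow_const_of_pos {x : ℝ} (hx : 0 < x) (p : ℝ) :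
    HasDerivAt (fun y => y ^ p) (p * x ^ p / x) x := by
  simpa [rpow_sub_one hx.ne', mul_div_assoc] using hasDerivAt_rpow_const (p := p) (Or.inl hx.ne')

theorem hasDerivAt_weightDen {α x : ℝ} (hx : 0 < x) :
    HasDerivAt (weightDen α)
      (2 * α * (cos (α * π / 2) * x ^ α + x ^ (2 * α)) / x) x :=
  ((((hasDerivAt_rpow_const_of_pos hx α).const_mul (2 * cos (α * π / 2))).const_add 1).add
    (hasDerivAt_rpow_const_of_pos hx (2 * α))).congr_deriv (by ring)

theorem hasDerivAt_φα {α x : ℝ} (hx : 0 < x) (hN : weightDen α x ≠ 0) :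
    HasDerivAt (φα α)
      (φα α x / x * (4 * α * (cos (α * π / 2) * x ^ α + x ^ (2 * α)) / weightDen α x
        - (1 + 3 * α))) x := by
  have hxp : x ^ (1 + 3 * α) ≠ 0 := (rpow_pos_of_pos hx _).ne'
  refine ((((hasDerivAt_weightDen (α := α) hx).pow 2).const_mul
    (1 / (2 * sin (α * π / 2)))).div (hasDerivAt_rpow_const_of_pos hx (1 + 3 * α)) hxp).congr_deriv ?_
  rw [φα, ← weightDen, Pi.pow_apply]
  field_simp
  ring

theorem one_div_two_mul_deriv_div_mul {f : ℝ → ℝ} {f' x α : ℝ} (hf : HasDerivAt f f' x)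
    (hfx : f x ≠ 0) (hα : α ≠ 0) :
    1 / (2 * f x) * deriv (fun y => y / α * f y) x = (1 + x * f' / f x) / (2 * α) := by
  have h : HasDerivAt (fun y => y / α * f y) (1 / α * f x + x / α * f') x :=
    ((hasDerivAt_id' x).div_const α).mul hf
  rw [h.deriv]
  field_simp

theorem damping_L2_alpha (α : ℝ) (hα : α ∈ Set.Ioc (0:ℝ) 1) (x : ℝ) (hx : 0 < x) :
    (1 / (2 * φα α x)) * deriv (fun y => (y / α) * φα α y) x + (-1 + uαx α x) = -(1/2) := by
  obtain ⟨hα0, hα1⟩ := hα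
  have hs : sin (α * π / 2) ≠ 0 :=
    (sin_pos_of_pos_of_lt_pi (by positivity) (by nlinarith [pi_pos])).ne'
  have hN : weightDen α x ≠ 0 := (weightDen_pos hs hx).ne'
  have hφ : φα α x ≠ 0 :=
    div_ne_zero (mul_ne_zero (by simpa using hs) (pow_ne_zero _ hN)) (rpow_pos_of_pos hx _).ne'
  rw [one_div_two_mul_deriv_div_mul (hasDerivAt_φα hx hN) hφ hα0.ne']
  have hu : uαx α x = 2 * (1 + cos (α * π / 2) * x ^ α) / weightDen α x := rfl
  rw [hu]
  unfold weightDen at hN ⊢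
  -- otherwise `field_simp` turns some, but not all, of the exponents `2 * α` into `α * 2`
  generalize x ^ (2 * α) = w at hN ⊢
  field_simp
  ring
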